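/- arXiv:0912.3999 — 2 statements merged into one kernel-verified Lean document; each statement's English description precedes it below -/
import Mathlib

section
/- Fix a real α > −1. For every μ > 0 there exist positive constants C = C(μ) and Ω = Ω(μ) such that for every integer N ≥ 1 and every z ∈ ℂ with Re z ≥ 0 and Im z ≥ μ, both |h_N(4Nz)| ≤ C · N^{−(α+1)/2} · Ω^N · |z|^{N+1/2} and |h_{N−1}(4Nz)| ≤ C · N^{−(α+1)/2} · Ω^{N−1} · |z|^{N−1/2} hold. (Uniform upper bounds for the orthonormal Laguerre-type polynomials in the upper half plane.) -/
open MeasureTheory Filter Topology Finset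
open scoped Real Classical

noncomputable section

namespace RMT

/-- Extend a finite tuple by zero. -/
def extFun {n : ℕ} (t : Fin n → ℝ) : ℕ → ℝ := fun k => if h : k < n then t ⟨k, h⟩ else 0

/-- Squared Vandermonde determinant ∏_{i<j} (x_j - x_i)². -/
def vdm2 {N : ℕ} (x : Fin N → ℝ) : ℝ :=
  ∏ p ∈ Finset.univ.filter (fun p : Fin N × Fin N => p.1 < p.2), (x p.2 - x p.1) ^ 2

/-- Laguerre weight ∏ xᵢ^α (real power). -/
def lagWeight (α : ℝ) {N : ℕ} (x : Fin N → ℝ) : ℝ := ∏ i, x i ^ α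

/-- Partition function of the fixed trace LUE:
`Z_δ^r = r^{N(N+α)} ∏_{j=1}^N Γ(1+j)Γ(α+j) / Γ(N(N+α))`. -/
def ftlueZ (α : ℝ) (N : ℕ) (r : ℝ) : ℝ :=
  r ^ ((N : ℝ) * ((N : ℝ) + α)) *
    (∏ j ∈ Finset.range N, Real.Gamma (1 + ((j : ℝ) + 1)) * Real.Gamma (α + ((j : ℝ) + 1))) /
      Real.Gamma ((N : ℝ) * ((N : ℝ) + α))

/-- The full eigenvalue vector for the fixed trace LUE: the first `n` coordinates are the fixed
arguments `t`, the next `N-1-n` coordinates are the integration variables `y`, and the last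
coordinate is `r - ∑ t - ∑ y`. -/
def ftlueVec (N n : ℕ) (r : ℝ) (t : Fin n → ℝ) (y : Fin (N - 1 - n) → ℝ) : Fin N → ℝ :=
  fun i =>
    if (i : ℕ) < n then extFun t (i : ℕ)
    else if (i : ℕ) < N - 1 then extFun y ((i : ℕ) - n)
    else r - (∑ j, t j) - (∑ k, y k)

/-- `n`-point correlation function of the fixed trace LUE (FTLUE) with trace `r`. -/
def ftlueR (α : ℝ) (N n : ℕ) (r : ℝ) (t : Fin n → ℝ) : ℝ :=
  if (∀ i, 0 ≤ t i) ∧ (∑ i, t i) ≤ r then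
    ((N.factorial : ℝ) / ((N - n).factorial : ℝ)) / ftlueZ α N r *
      ∫ y : Fin (N - 1 - n) → ℝ,
        (if (∀ k, 0 ≤ y k) ∧ (∑ i, t i) + (∑ k, y k) ≤ r then
          vdm2 (ftlueVec N n r t y) * lagWeight α (ftlueVec N n r t y) else 0)
  else 0

/-- Full eigenvalue vector for ensembles where all of `x_{n+1},…,x_N` are integrated. -/
def fullVec (N n : ℕ) (t : Fin n → ℝ) (y : Fin (N - n) → ℝ) : Fin N → ℝ :=
  fun i => if (i : ℕ) < n then extFun t (i : ℕ) else extFun y ((i : ℕ) - n)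

/-- Partition function of the bounded trace LUE. -/
def btlueZ (α : ℝ) (N : ℕ) (r : ℝ) : ℝ :=
  ∫ x : Fin N → ℝ,
    (if (∀ i, 0 ≤ x i) ∧ (∑ i, x i) ≤ r then vdm2 x * lagWeight α x else 0)

/-- `n`-point correlation function of the bounded trace LUE (BTLUE). -/
def btlueR (α : ℝ) (N n : ℕ) (r : ℝ) (t : Fin n → ℝ) : ℝ :=
  if ∀ i, 0 ≤ t i then
    ((N.factorial : ℝ) / ((N - n).factorial : ℝ)) / btlueZ α N r *
      ∫ y : Fin (N - n) → ℝ,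
        (if (∀ k, 0 ≤ y k) ∧ (∑ i, t i) + (∑ k, y k) ≤ r then
          vdm2 (fullVec N n t y) * lagWeight α (fullVec N n t y) else 0)
  else 0

/-- Partition function of the LUE with scale `s`. -/
def lueZ (α : ℝ) (N : ℕ) (s : ℝ) : ℝ :=
  s ^ ((N : ℝ) * ((N : ℝ) + α)) *
    ∏ j ∈ Finset.range N, Real.Gamma (1 + ((j : ℝ) + 1)) * Real.Gamma (α + ((j : ℝ) + 1))

/-- Joint eigenvalue density of the LUE with scale `s`. -/
def luePdf (α : ℝ) (N : ℕ) (s : ℝ) (x : Fin N → ℝ) : ℝ :=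
  if ∀ i, 0 ≤ x i then
    (1 / lueZ α N s) * vdm2 x * ∏ i, x i ^ α * Real.exp (-(x i) / s)
  else 0

/-- `n`-point correlation function of the LUE with scale `s`. -/
def lueR (α : ℝ) (N n : ℕ) (s : ℝ) (t : Fin n → ℝ) : ℝ :=
  ((N.factorial : ℝ) / ((N - n).factorial : ℝ)) *
    ∫ y : Fin (N - n) → ℝ,
      (if ∀ k, 0 ≤ y k then luePdf α N s (fullVec N n t y) else 0)

/-- Gamma(N(N+α),1) density. -/
def gammaDens (α : ℝ) (N : ℕ) (x : ℝ) : ℝ :=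
  if 0 ≤ x then
    Real.exp (-x) * x ^ ((N : ℝ) * ((N : ℝ) + α) - 1) / Real.Gamma ((N : ℝ) * ((N : ℝ) + α))
  else 0

/-- Sine kernel. -/
def Ksin (u v : ℝ) : ℝ :=
  if u = v then 1 else Real.sin (π * (u - v)) / (π * (u - v))

/-- Marchenko–Pastur density. -/
def psiMP (x : ℝ) : ℝ :=
  if 0 < x ∧ x ≤ 1 then (2 / π) * Real.sqrt ((1 - x) / x) else 0

/-- Airy function, as a convergent improper integral. -/
def Ai (x : ℝ) : ℝ :=
  limUnder atTop (fun T : ℝ => (1 / π) * ∫ t in (0 : ℝ)..T, Real.cos (t ^ 3 / 3 + x * t))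

/-- Airy kernel. -/
def KAiry (u v : ℝ) : ℝ :=
  if u = v then (deriv Ai u) ^ 2 - u * (Ai u) ^ 2
  else (deriv Ai u * Ai v - deriv Ai v * Ai u) / (u - v)

/-- Bessel function of the first kind of (real) index `α`, as a power series. -/
def besselJ (α : ℝ) (x : ℝ) : ℝ :=
  ∑' m : ℕ,
    ((-1 : ℝ) ^ m / ((m.factorial : ℝ) * Real.Gamma ((m : ℝ) + α + 1))) *
      (x / 2) ^ (2 * (m : ℝ) + α)

/-- Bessel kernel off the diagonal. -/
def KBesselOff (α : ℝ) (u v : ℝ) : ℝ :=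
  (besselJ α (Real.sqrt u) * Real.sqrt v * deriv (besselJ α) (Real.sqrt v) -
      besselJ α (Real.sqrt v) * Real.sqrt u * deriv (besselJ α) (Real.sqrt u)) /
    (2 * (u - v))

/-- Bessel kernel, extended to the diagonal by its limiting value. -/
def KBessel (α : ℝ) (u v : ℝ) : ℝ :=
  if u = v then limUnder (𝓝[≠] u) (fun w => KBesselOff α u w) else KBesselOff α u v

/-- Orthonormal polynomials for the weight `x^α e^{-x}` on `(0,∞)`, at complex arguments. -/
def hkC (α : ℝ) (k : ℕ) (z : ℂ) : ℂ :=
  (Real.sqrt (Real.Gamma ((k : ℝ) + 1) / Real.Gamma ((k : ℝ) + α + 1)) : ℂ) *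
    ∑ j ∈ Finset.range (k + 1),
      (-1 : ℂ) ^ (k - j) *
        ((Real.Gamma ((k : ℝ) + α + 1) /
            (Real.Gamma ((j : ℝ) + α + 1) * ((k - j).factorial : ℝ) * (j.factorial : ℝ)) : ℝ) : ℂ) *
        z ^ j

/-- `φ_k(z) = z^{α/2} e^{-z/2} h_k(z)` (principal branch). -/
def phikC (α : ℝ) (k : ℕ) (z : ℂ) : ℂ :=
  z ^ ((α : ℂ) / 2) * Complex.exp (-z / 2) * hkC α k z

/-- Correlation kernel `K_N(z,w) = ∑_{k<N} φ_k(z) φ_k(w)`. -/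
def KNC (α : ℝ) (N : ℕ) (z w : ℂ) : ℂ := ∑ k ∈ Finset.range N, phikC α k z * phikC α k w

/-- Rescaled kernel `K̃_N(z,w,s) = s⁻¹ K_N(z/s, w/s)`. -/
def KNS (α : ℝ) (N : ℕ) (z w s : ℂ) : ℂ := s⁻¹ * KNC α N (z / s) (w / s)

/-- `Λ(H) = 1 + iH`. -/
def Lam (H : ℝ) : ℂ := 1 + Complex.I * (H : ℂ)

/-- Analytic continuation `ψ̂` of the Marchenko–Pastur density to the upper half plane,
with boundary values `ψ` on the reals. -/
def psihat (z : ℂ) : ℂ :=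
  if z.im = 0 then (psiMP z.re : ℂ)
  else (2 / (Complex.I * (π : ℂ))) * (z - 1) ^ ((1 : ℂ) / 2) / z ^ ((1 : ℂ) / 2)

/-- Characteristic function `φ_N(y) = e^{iy(N+α)} (1+iy/N)^{-N(N+α)}` (principal branch). -/
def phiN (α : ℝ) (N : ℕ) (y : ℝ) : ℂ :=
  Complex.exp (Complex.I * (y : ℂ) * (((N : ℝ) + α : ℝ) : ℂ)) *
    (1 + Complex.I * (y : ℂ) / (N : ℂ)) ^ (-((((N : ℝ) * ((N : ℝ) + α) : ℝ) : ℂ)))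

end RMT

namespace RMT

/-!
Bounding the coefficients crudely, `Γ(k + α + 1) / Γ(j + α + 1) ≤ (k + α + 1) ^ (k - j)` and
`Γ(k + 1) / Γ(k + α + 1) ≤ (k + α + 1) / Γ(α + 2)`, the binomial theorem gives
`|h_k(w)| ≤ √((k + α + 1) / Γ(α + 2)) (|w| + k + α + 1) ^ k / k!`.
For `w = 4 N z` with `|z| ≥ μ` the right side is at most `|z| ^ k e ^ (4 N + (k + α + 1) / μ)`,
and every factor polynomial in `N`, as well as the missing `√|z| ≥ √μ`, is absorbed into the
constants once `Ω` is large enough. Both claimed bounds are the instances `k = N` and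
`k = N - 1` of `|h_k(4 N z)| ≤ C N ^ (-(α + 1) / 2) Ω ^ k |z| ^ (k + 1 / 2)`.
-/

open Real
open scoped Nat

variable {α : ℝ}

lemma natCast_add_add_one_pos (hα : -1 < α) (k : ℕ) : 0 < (k : ℝ) + α + 1 := by
  linarith [k.cast_nonneg (α := ℝ)]

lemma Gamma_add_nat_le {x : ℝ} (hx : 0 < x) (d : ℕ) :
    Gamma (x + d) ≤ Gamma x * (x + d) ^ d := by
  induction d with
  | zero => simp
  | succ d ih =>
    have hxd : 0 < x + d := by positivity
    calc Gamma (x + (d + 1 : ℕ)) = (x + d) * Gamma (x + d) := by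
          rw [Nat.cast_succ, ← add_assoc, Gamma_add_one hxd.ne']
      _ ≤ (x + (d + 1 : ℕ)) * (Gamma x * (x + (d + 1 : ℕ)) ^ d) := by
          have hle : x + d ≤ x + (d + 1 : ℕ) := by push_cast; linarith
          refine mul_le_mul hle (ih.trans ?_) (Gamma_pos_of_pos hxd).le (by positivity)
          have := Gamma_pos_of_pos hx
          gcongr
      _ = Gamma x * (x + (d + 1 : ℕ)) ^ (d + 1) := by ring

lemma Gamma_mul_factorial_le {x : ℝ} (hx : 1 ≤ x) (d : ℕ) :
    Gamma x * d ! ≤ Gamma (x + d) := by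
  induction d with
  | zero => simp
  | succ d ih =>
    have hxd : 0 < x + d := by positivity
    calc Gamma x * (d + 1)! = (d + 1) * (Gamma x * d !) := by push_cast [Nat.factorial_succ]; ring
      _ ≤ (x + d) * Gamma (x + d) := by
          have := Gamma_pos_of_pos (show 0 < x by linarith)
          exact mul_le_mul (by linarith) ih (by positivity) hxd.le
      _ = Gamma (x + (d + 1 : ℕ)) := by
          rw [Nat.cast_succ, ← add_assoc, Gamma_add_one hxd.ne']

lemma Gamma_nat_add_one_div_le (hα : -1 < α) (k : ℕ) :
    Gamma (k + 1) / Gamma (k + α + 1) ≤ (k + α + 1) / Gamma (α + 2) := by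
  have hkα := natCast_add_add_one_pos hα k
  -- `Γ(k + α + 2) ≥ Γ(α + 2) k!` and `Γ(k + α + 2) = (k + α + 1) Γ(k + α + 1)`
  have hlow := Gamma_mul_factorial_le (x := α + 2) (by linarith) k
  rw [show α + 2 + k = k + α + 1 + 1 by ring, Gamma_add_one hkα.ne',
    ← Gamma_nat_eq_factorial] at hlow
  rw [div_le_div_iff₀ (Gamma_pos_of_pos hkα) (Gamma_pos_of_pos (by linarith))]
  linarith

/-- The coefficient of `x ^ j` in `hkC α k`, up to the sign `(-1) ^ (k - j)` and the
normalisation `√(Γ(k + 1) / Γ(k + α + 1))`. -/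
def laguerreCoeff (α : ℝ) (k j : ℕ) : ℝ :=
  Gamma (k + α + 1) / (Gamma (j + α + 1) * (k - j)! * j !)

lemma laguerreCoeff_nonneg (hα : -1 < α) (k j : ℕ) : 0 ≤ laguerreCoeff α k j := by
  have hk := Gamma_pos_of_pos (natCast_add_add_one_pos hα k)
  have hj := Gamma_pos_of_pos (natCast_add_add_one_pos hα j)
  unfold laguerreCoeff
  positivity

lemma laguerreCoeff_le (hα : -1 < α) {k j : ℕ} (hjk : j ≤ k) :
    laguerreCoeff α k j ≤ (k + α + 1) ^ (k - j) / ((k - j)! * j !) := by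
  have hj := natCast_add_add_one_pos hα j
  have hGamma := Gamma_add_nat_le hj (k - j)
  rw [Nat.cast_sub hjk, show (j : ℝ) + α + 1 + (k - j) = k + α + 1 by ring] at hGamma
  unfold laguerreCoeff
  have := Gamma_pos_of_pos hj
  rw [div_le_div_iff₀ (by positivity) (by positivity)]
  calc Gamma (k + α + 1) * ((k - j)! * j !)
      ≤ Gamma (j + α + 1) * (k + α + 1) ^ (k - j) * ((k - j)! * j !) := by gcongr
    _ = _ := by ring

lemma sum_pow_mul_pow_div_factorial (x y : ℝ) (k : ℕ) :
    ∑ j ∈ range (k + 1), x ^ j * y ^ (k - j) / ((k - j)! * j !) = (x + y) ^ k / k ! := by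
  rw [add_pow, sum_div]
  refine sum_congr rfl fun j hj => ?_
  rw [Nat.cast_choose ℝ (Nat.lt_succ_iff.mp (mem_range.mp hj))]
  field_simp

lemma norm_hkC_le (hα : -1 < α) (k : ℕ) (w : ℂ) :
    ‖hkC α k w‖ ≤
      √((k + α + 1) / Gamma (α + 2)) * ((‖w‖ + (k + α + 1)) ^ k / k !) := by
  have hcoeff : ∀ j ∈ range (k + 1),
      ‖(-1 : ℂ) ^ (k - j) * (laguerreCoeff α k j : ℂ) * w ^ j‖
        ≤ ‖w‖ ^ j * (k + α + 1) ^ (k - j) / ((k - j)! * j !) := fun j hj => by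
    rw [norm_mul, norm_mul, norm_pow, norm_neg, norm_one, one_pow, one_mul, norm_pow,
      Complex.norm_real, Real.norm_of_nonneg (laguerreCoeff_nonneg hα k j), mul_comm,
      mul_div_assoc]
    gcongr
    exact laguerreCoeff_le hα (Nat.lt_succ_iff.mp (mem_range.mp hj))
  change ‖(√(Gamma (k + 1) / Gamma (k + α + 1)) : ℂ) *
    ∑ j ∈ range (k + 1), (-1 : ℂ) ^ (k - j) * (laguerreCoeff α k j : ℂ) * w ^ j‖ ≤ _
  rw [norm_mul, Complex.norm_real, Real.norm_of_nonneg (sqrt_nonneg _),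
    ← sum_pow_mul_pow_div_factorial]
  exact mul_le_mul (sqrt_le_sqrt (Gamma_nat_add_one_div_le hα k))
    ((norm_sum_le _ _).trans (sum_le_sum hcoeff)) (norm_nonneg _) (sqrt_nonneg _)

lemma add_pow_div_factorial_le_pow_mul_exp {a D μ r : ℝ} (ha : 0 ≤ a) (hD : 0 ≤ D)
    (hμ : 0 < μ) (hr : μ ≤ r) (k : ℕ) :
    (a * r + D) ^ k / k ! ≤ r ^ k * exp (a + D / μ) := by
  have hr0 : 0 < r := hμ.trans_le hr
  have hD' : D ≤ r * (D / μ) := by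
    rw [mul_div_assoc', le_div_iff₀ hμ]
    nlinarith
  calc (a * r + D) ^ k / k ! ≤ (r * (a + D / μ)) ^ k / k ! := by gcongr; linarith
    _ = r ^ k * ((a + D / μ) ^ k / k !) := by rw [mul_pow, mul_div_assoc]
    _ ≤ r ^ k * exp (a + D / μ) := by gcongr; exact pow_div_factorial_le_exp _ (by positivity) k

lemma rpow_le_exp_mul_sub_one {y p : ℝ} (hy : 0 ≤ y) (hp : 0 ≤ p) :
    y ^ p ≤ exp (p * (y - 1)) := by
  rw [mul_comm, exp_mul]
  exact rpow_le_rpow hy (by linarith [add_one_le_exp (y - 1)]) hp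

lemma exists_sqrt_mul_exp_le (hα : -1 < α) (μ : ℝ) :
    ∃ C > (0 : ℝ), ∃ Ω > (0 : ℝ), ∀ N k : ℕ, 1 ≤ N → k ≤ N → N ≤ k + 1 →
      √(k + α + 1) * exp (4 * N + (k + α + 1) / μ) ≤
        C * (N : ℝ) ^ (-(α + 1) / 2) * Ω ^ k := by
  refine ⟨exp (α / 2 + 4 + (α + 1) / μ), exp_pos _, exp ((α + 2) / 2 + 4 + 1 / μ), exp_pos _,
    fun N k hN hk hNk => ?_⟩
  have hN0 : (0 : ℝ) < N := by exact_mod_cast hN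
  have hk' : (k : ℝ) ≤ N := by exact_mod_cast hk
  have hNk' : (N : ℝ) ≤ k + 1 := by exact_mod_cast hNk
  have hsqrt : √(k + α + 1) ≤ exp ((k + α) / 2) := by
    rw [sqrt_eq_rpow]
    refine (rpow_le_exp_mul_sub_one (natCast_add_add_one_pos hα k).le (by norm_num)).trans_eq ?_
    ring_nf
  have hNpow : exp (-((α + 1) / 2 * (N - 1))) ≤ (N : ℝ) ^ (-(α + 1) / 2) := by
    rw [exp_neg, neg_div, rpow_neg hN0.le]
    exact inv_anti₀ (by positivity) (rpow_le_exp_mul_sub_one hN0.le (by linarith))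
  have hexponent : (k + α) / 2 + (4 * N + (k + α + 1) / μ) ≤
      α / 2 + 4 + (α + 1) / μ + -((α + 1) / 2 * (N - 1)) + k * ((α + 2) / 2 + 4 + 1 / μ) := by
    have hdecay : (α + 1) / 2 * (N - 1) ≤ (α + 1) / 2 * k := by gcongr <;> linarith
    have hsplit : (k + α + 1) / μ = k * (1 / μ) + (α + 1) / μ := by ring
    rw [hsplit]
    linarith
  calc √(k + α + 1) * exp (4 * N + (k + α + 1) / μ)
      ≤ exp ((k + α) / 2) * exp (4 * N + (k + α + 1) / μ) := by gcongr
    _ ≤ exp (α / 2 + 4 + (α + 1) / μ + -((α + 1) / 2 * (N - 1)) +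
          k * ((α + 2) / 2 + 4 + 1 / μ)) := by rw [← exp_add]; exact exp_le_exp.mpr hexponent
    _ = exp (α / 2 + 4 + (α + 1) / μ) * exp (-((α + 1) / 2 * (N - 1))) *
          exp ((α + 2) / 2 + 4 + 1 / μ) ^ k := by rw [exp_add, exp_add, ← exp_nat_mul]
    _ ≤ _ := by gcongr

lemma pow_le_rpow_add_half_div_sqrt {μ r : ℝ} (hμ : 0 < μ) (hr : μ ≤ r) (k : ℕ) :
    r ^ k ≤ r ^ ((k : ℝ) + 1 / 2) / √μ := by
  have hr0 : 0 < r := hμ.trans_le hr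
  rw [le_div_iff₀ (sqrt_pos.mpr hμ), rpow_add hr0, rpow_natCast, ← sqrt_eq_rpow]
  gcongr

lemma norm_hkC_four_mul_le (hα : -1 < α) {μ : ℝ} (hμ : 0 < μ) :
    ∃ C > (0 : ℝ), ∃ Ω > (0 : ℝ), ∀ N k : ℕ, 1 ≤ N → k ≤ N → N ≤ k + 1 →
      ∀ z : ℂ, μ ≤ ‖z‖ →
        ‖hkC α k (4 * (N : ℂ) * z)‖ ≤
          C * (N : ℝ) ^ (-(α + 1) / 2) * Ω ^ k * ‖z‖ ^ ((k : ℝ) + 1 / 2) := by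
  obtain ⟨C, hC, Ω, hΩ, hgrowth⟩ := exists_sqrt_mul_exp_le hα μ
  have hΓ : 0 < √(Gamma (α + 2)) := sqrt_pos.mpr (Gamma_pos_of_pos (by linarith))
  refine ⟨C / (√(Gamma (α + 2)) * √μ), by positivity, Ω, hΩ,
    fun N k hN hk hNk z hz => ?_⟩
  have hnorm : ‖4 * (N : ℂ) * z‖ = 4 * N * ‖z‖ := by
    rw [norm_mul, norm_mul, Complex.norm_natCast]; norm_num
  calc ‖hkC α k (4 * (N : ℂ) * z)‖
      ≤ √((k + α + 1) / Gamma (α + 2)) * ((4 * N * ‖z‖ + (k + α + 1)) ^ k / k !) :=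
        hnorm ▸ norm_hkC_le hα k _
    _ ≤ √((k + α + 1) / Gamma (α + 2)) * (‖z‖ ^ k * exp (4 * N + (k + α + 1) / μ)) := by
        gcongr
        exact add_pow_div_factorial_le_pow_mul_exp (by positivity)
          (natCast_add_add_one_pos hα k).le hμ hz k
    _ = √(k + α + 1) * exp (4 * N + (k + α + 1) / μ) * ‖z‖ ^ k / √(Gamma (α + 2)) := by
        rw [sqrt_div' _ (Gamma_pos_of_pos (by linarith)).le]; ring
    _ ≤ C * (N : ℝ) ^ (-(α + 1) / 2) * Ω ^ k * (‖z‖ ^ ((k : ℝ) + 1 / 2) / √μ) /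
          √(Gamma (α + 2)) := by
        gcongr ?_ * ?_ / _
        · exact hgrowth N k hN hk hNk
        · exact pow_le_rpow_add_half_div_sqrt hμ hz k
    _ = _ := by field_simp

/-- uniform upper bounds for the orthonormal Laguerre-type polynomials in the
upper half plane. -/
theorem hk_upper_bound (α : ℝ) (hα : -1 < α) (μ : ℝ) (hμ : 0 < μ) :
    ∃ C > (0 : ℝ), ∃ Ω > (0 : ℝ), ∀ N : ℕ, 1 ≤ N →
      ∀ z : ℂ, 0 ≤ z.re → μ ≤ z.im →
        ‖hkC α N (4 * (N : ℂ) * z)‖ ≤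
            C * (N : ℝ) ^ (-(α + 1) / 2) * Ω ^ N * ‖z‖ ^ ((N : ℝ) + 1 / 2) ∧
          ‖hkC α (N - 1) (4 * (N : ℂ) * z)‖ ≤
            C * (N : ℝ) ^ (-(α + 1) / 2) * Ω ^ (N - 1) * ‖z‖ ^ ((N : ℝ) - 1 / 2) := by
  obtain ⟨C, hC, Ω, hΩ, hbound⟩ := norm_hkC_four_mul_le hα hμ
  refine ⟨C, hC, Ω, hΩ, fun N hN z _ hz => ?_⟩
  have hμz : μ ≤ ‖z‖ := hz.trans (Complex.im_le_norm z)
  refine ⟨hbound N N hN le_rfl (by omega) z hμz, ?_⟩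
  have hcast : ((N - 1 : ℕ) : ℝ) + 1 / 2 = N - 1 / 2 := by
    rw [Nat.cast_sub hN, Nat.cast_one]; ring
  have hprev := hbound N (N - 1) hN (by omega) (by omega) z hμz
  rwa [hcast] at hprev

end RMT
end
end

section
/- Fix a real α > −1, and let (b_N)_{N≥1} be a sequence of reals with 0 < b_N < 1 for all N, b_N → 0, and N·b_N/√(ln N) → ∞ as N → ∞. For each N set N_α = N(N+α) and E_N = ∫₀^{1−b_N} N_α·γ(N_α u) du + ∫_{1+b_N}^{∞} N_α·γ(N_α u) du (so that E_N = 1 − ∫_{1−b_N}^{1+b_N} N_α·γ(N_α u) du). Then for every ε ∈ (0,1) there exists N₀ such that E_N ≤ exp( −(1/2)·N²·b_N²·(1−ε) ) for all N ≥ N₀. (Concentration of the Gamma-distributed trace variable in a shrinking window around 1.) -/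
open MeasureTheory Filter Topology Finset
open scoped Real Classical

noncomputable section

/-!
Write `k = N(N+α)`. After the substitution `x = k u` the quantity `E_N` is the mass that the
Gamma(k, 1) law puts outside `[k(1-b), k(1+b)]`. Tilting the density by `e^{θx}` gives a Gamma law
of rate `1-θ`, which yields the Chernoff bounds `exp (-k I(1 ± b))` with rate function
`I(x) = x - 1 - log x`. The Taylor expansion of the logarithm gives
`I(1 ± b) ≥ b²/2 - b³/(1-b)`, so `E_N ≤ 2 exp (-k b²(1/2 - b/(1-b)))`; since `b → 0`,
`α/N → 0` and `N b → ∞` (which absorbs the factor 2), this is eventually at most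
`exp (-(1/2) N² b² (1-ε))`.
-/

open scoped Pointwise

theorem Filter.Tendsto.atTop_of_div_of_one_le {ι : Type*} {l : Filter ι} {f g : ι → ℝ}
    (h : Tendsto (fun i => f i / g i) l atTop) (hg : ∀ᶠ i in l, 1 ≤ g i) :
    Tendsto f l atTop := by
  refine tendsto_atTop_mono' l ?_ h
  filter_upwards [h.eventually_ge_atTop 0, hg] with i hi hgi
  have hgi₀ : 0 < g i := by linarith
  exact div_le_self (by simpa using (le_div_iff₀ hgi₀).1 hi) hgi

theorem MeasureTheory.setIntegral_const_mul_comp_mul (f : ℝ → ℝ) {c : ℝ} (hc : 0 < c)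
    (s : Set ℝ) : ∫ u in s, c * f (c * u) = ∫ x in c • s, f x := by
  have h := Measure.setIntegral_comp_smul_of_pos volume f s hc
  simp only [smul_eq_mul, Module.finrank_self, pow_one] at h
  rw [integral_const_mul, h, mul_inv_cancel_left₀ hc.ne']

theorem Real.sq_div_two_sub_le_neg_sub_log_one_sub {y : ℝ} (hy : |y| < 1) :
    y ^ 2 / 2 - |y| ^ 3 / (1 - |y|) ≤ -y - Real.log (1 - y) := by
  have h := (abs_le.1 (Real.abs_log_sub_add_sum_range_le hy 2)).2
  simp only [Finset.sum_range_succ, Finset.sum_range_zero] at h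
  norm_num at h
  linarith

namespace ProbabilityTheory

theorem integrable_gammaPDFReal {a r : ℝ} (ha : 0 < a) (hr : 0 < r) :
    Integrable (gammaPDFReal a r) := by
  refine ⟨(measurable_gammaPDFReal a r).aestronglyMeasurable, ?_⟩
  rw [hasFiniteIntegral_iff_ofReal (ae_of_all _ (gammaPDFReal_nonneg ha hr))]
  exact (lintegral_gammaPDF_eq_one ha hr).trans_lt ENNReal.one_lt_top

theorem setIntegral_gammaPDFReal_le_one {a r : ℝ} (ha : 0 < a) (hr : 0 < r) (s : Set ℝ) :
    ∫ x in s, gammaPDFReal a r x ≤ 1 := by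
  have hnn := ae_of_all volume (gammaPDFReal_nonneg ha hr)
  calc ∫ x in s, gammaPDFReal a r x ≤ ∫ x, gammaPDFReal a r x :=
        setIntegral_le_integral (integrable_gammaPDFReal ha hr) hnn
    _ = 1 := by
        rw [integral_eq_lintegral_of_nonneg_ae hnn
          (measurable_gammaPDFReal a r).aestronglyMeasurable]
        exact (ENNReal.toReal_eq_one_iff _).2 (lintegral_gammaPDF_eq_one ha hr)

theorem exp_mul_gammaPDFReal {a θ : ℝ} (hθ : θ < 1) (x : ℝ) :
    Real.exp (θ * x) * gammaPDFReal a 1 x = (1 - θ) ^ (-a) * gammaPDFReal a (1 - θ) x := by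
  unfold gammaPDFReal
  split_ifs
  · have h : (1 - θ) ^ (-a) * (1 - θ) ^ a = 1 := by
      rw [Real.rpow_neg (by linarith), inv_mul_cancel₀ (by positivity)]
    rw [Real.one_rpow]
    calc _ = (1 - θ) ^ (-a) * (1 - θ) ^ a / Real.Gamma a * x ^ (a - 1) *
          (Real.exp (θ * x) * Real.exp (-(1 * x))) := by rw [h]; ring
      _ = _ := by rw [← Real.exp_add]; ring_nf
  · simp

theorem setIntegral_gammaPDFReal_le {a θ c : ℝ} (ha : 0 < a) (hθ : θ < 1) {s : Set ℝ}
    (hs : MeasurableSet s) (hc : ∀ x ∈ s, c ≤ θ * x) :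
    ∫ x in s, gammaPDFReal a 1 x ≤ Real.exp (-c) * (1 - θ) ^ (-a) := by
  have hθ' : 0 < 1 - θ := by linarith
  have hpt : ∀ x ∈ s, gammaPDFReal a 1 x ≤
      Real.exp (-c) * (1 - θ) ^ (-a) * gammaPDFReal a (1 - θ) x := by
    intro x hx
    rw [mul_assoc, ← exp_mul_gammaPDFReal hθ, ← mul_assoc, ← Real.exp_add]
    exact le_mul_of_one_le_left (gammaPDFReal_nonneg ha one_pos x)
      (Real.one_le_exp (by linarith [hc x hx]))
  calc ∫ x in s, gammaPDFReal a 1 x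
      ≤ ∫ x in s, Real.exp (-c) * (1 - θ) ^ (-a) * gammaPDFReal a (1 - θ) x :=
        setIntegral_mono_on (integrable_gammaPDFReal ha one_pos).integrableOn
          ((integrable_gammaPDFReal ha hθ').integrableOn.const_mul _) hs hpt
    _ = Real.exp (-c) * (1 - θ) ^ (-a) * ∫ x in s, gammaPDFReal a (1 - θ) x :=
        integral_const_mul _ _
    _ ≤ Real.exp (-c) * (1 - θ) ^ (-a) :=
        mul_le_of_le_one_right (by positivity) (setIntegral_gammaPDFReal_le_one ha hθ' s)

theorem setIntegral_gammaPDFReal_le_exp_rate {a x : ℝ} (ha : 0 < a) (hx : 0 < x) {s : Set ℝ}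
    (hs : MeasurableSet s) (hsx : ∀ y ∈ s, (1 - x⁻¹) * (a * x) ≤ (1 - x⁻¹) * y) :
    ∫ y in s, gammaPDFReal a 1 y ≤ Real.exp (-(a * (x - 1 - Real.log x))) := by
  refine (setIntegral_gammaPDFReal_le ha (by simpa using hx) hs hsx).trans_eq ?_
  rw [sub_sub_cancel, Real.inv_rpow hx.le, Real.rpow_neg hx.le, inv_inv,
    Real.rpow_def_of_pos hx, ← Real.exp_add]
  congr 1
  field_simp
  ring

theorem integral_Ioi_gammaPDFReal_le {a x : ℝ} (ha : 0 < a) (hx : 1 ≤ x) :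
    ∫ y in Set.Ioi (a * x), gammaPDFReal a 1 y ≤ Real.exp (-(a * (x - 1 - Real.log x))) :=
  setIntegral_gammaPDFReal_le_exp_rate ha (by linarith) measurableSet_Ioi fun _ hy =>
    mul_le_mul_of_nonneg_left (le_of_lt hy) (sub_nonneg.2 (inv_le_one_of_one_le₀ hx))

theorem integral_Ioc_gammaPDFReal_le {a x : ℝ} (ha : 0 < a) (hx₀ : 0 < x) (hx₁ : x ≤ 1) :
    ∫ y in Set.Ioc 0 (a * x), gammaPDFReal a 1 y ≤ Real.exp (-(a * (x - 1 - Real.log x))) :=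
  setIntegral_gammaPDFReal_le_exp_rate ha hx₀ measurableSet_Ioc fun _ hy =>
    mul_le_mul_of_nonpos_left hy.2 (sub_nonpos.2 ((one_le_inv₀ hx₀).2 hx₁))

theorem integral_Ioc_add_integral_Ioi_gammaPDFReal_le {a b : ℝ} (ha : 0 < a) (hb₀ : 0 < b)
    (hb₁ : b < 1) :
    (∫ x in Set.Ioc 0 (a * (1 - b)), gammaPDFReal a 1 x) +
        ∫ x in Set.Ioi (a * (1 + b)), gammaPDFReal a 1 x ≤
      2 * Real.exp (-(a * (b ^ 2 / 2 - b ^ 3 / (1 - b)))) := by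
  have hb : |b| < 1 := by rwa [abs_of_pos hb₀]
  have hlower := Real.sq_div_two_sub_le_neg_sub_log_one_sub hb
  have hupper := Real.sq_div_two_sub_le_neg_sub_log_one_sub (y := -b) (by rwa [abs_neg])
  rw [abs_of_pos hb₀] at hlower
  rw [abs_neg, abs_of_pos hb₀, neg_sq, sub_neg_eq_add] at hupper
  have hexp : ∀ x, b ^ 2 / 2 - b ^ 3 / (1 - b) ≤ x - 1 - Real.log x →
      Real.exp (-(a * (x - 1 - Real.log x))) ≤ Real.exp (-(a * (b ^ 2 / 2 - b ^ 3 / (1 - b)))) :=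
    fun x hx => Real.exp_le_exp.2 (neg_le_neg (mul_le_mul_of_nonneg_left hx ha.le))
  rw [two_mul]
  exact add_le_add
    ((integral_Ioc_gammaPDFReal_le (x := 1 - b) ha (by linarith) (by linarith)).trans
      (hexp _ (by linarith)))
    ((integral_Ioi_gammaPDFReal_le (x := 1 + b) ha (by linarith)).trans (hexp _ (by linarith)))

end ProbabilityTheory

namespace RMT

open ProbabilityTheory

theorem gammaDens_eq_gammaPDFReal (α : ℝ) (N : ℕ) :
    gammaDens α N = gammaPDFReal ((N : ℝ) * ((N : ℝ) + α)) 1 := by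
  ext x
  simp only [gammaDens, gammaPDFReal, Real.one_rpow, one_mul]
  split_ifs <;> ring

theorem eventually_one_le_sqrt_log : ∀ᶠ N : ℕ in atTop, 1 ≤ Real.sqrt (Real.log N) :=
  (Real.tendsto_sqrt_atTop.comp (Real.tendsto_log_atTop.comp tendsto_natCast_atTop_atTop))
    |>.eventually_ge_atTop 1

theorem eventually_log_two_sub_le (α : ℝ) {ε : ℝ} (hε : 0 < ε) {b : ℕ → ℝ}
    (hb : Tendsto b atTop (𝓝 0)) (hNb : Tendsto (fun N : ℕ => (N : ℝ) * b N) atTop atTop) :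
    ∀ᶠ N : ℕ in atTop,
      Real.log 2 - (N : ℝ) * ((N : ℝ) + α) * (b N ^ 2 / 2 - b N ^ 3 / (1 - b N)) ≤
        -(1 / 2) * (N : ℝ) ^ 2 * b N ^ 2 * (1 - ε) := by
  -- `(N b)² g N` is the negated left-hand side, and `g N → 1/2 > (1 - ε)/2`.
  set g : ℕ → ℝ := fun N =>
    (1 + α / N) * (1 / 2 - b N / (1 - b N)) - Real.log 2 / ((N : ℝ) * b N) ^ 2
  have hg : Tendsto g atTop (𝓝 ((1 + 0) * (1 / 2 - 0 / (1 - 0)) - 0)) :=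
    ((tendsto_const_nhds.add (tendsto_const_div_atTop_nhds_zero_nat α)).mul
      (tendsto_const_nhds.sub (hb.div (tendsto_const_nhds.sub hb) (by norm_num)))).sub
      (tendsto_const_nhds.div_atTop ((tendsto_pow_atTop two_ne_zero).comp hNb))
  norm_num at hg
  filter_upwards [hg.eventually (lt_mem_nhds (by linarith : (1 - ε) / 2 < 1 / 2)),
    hNb.eventually_gt_atTop 0] with N hgN hN
  have hN0 : (N : ℝ) ≠ 0 := by rintro h; simp [h] at hN
  have hb0 : b N ≠ 0 := by rintro h; simp [h] at hN
  have hscaled : ((N : ℝ) * b N) ^ 2 * g N =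
      (N : ℝ) * ((N : ℝ) + α) * (b N ^ 2 / 2 - b N ^ 3 / (1 - b N)) - Real.log 2 := by
    simp only [g]
    field_simp
  nlinarith [mul_lt_mul_of_pos_left hgN (pow_pos hN 2)]

theorem gamma_trace_concentration_general (α : ℝ) (b : ℕ → ℝ)
    (hb0 : Tendsto b atTop (𝓝 0))
    (hbinf : Tendsto (fun N : ℕ => (N : ℝ) * b N / Real.sqrt (Real.log N)) atTop atTop) :
    ∀ ε ∈ Set.Ioo (0 : ℝ) 1, ∃ N₀ : ℕ, ∀ N : ℕ, N₀ ≤ N →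
      (∫ u in Set.Ioc (0 : ℝ) (1 - b N),
          (N : ℝ) * ((N : ℝ) + α) * gammaDens α N ((N : ℝ) * ((N : ℝ) + α) * u)) +
        (∫ u in Set.Ioi (1 + b N),
          (N : ℝ) * ((N : ℝ) + α) * gammaDens α N ((N : ℝ) * ((N : ℝ) + α) * u)) ≤
      Real.exp (-(1 / 2) * (N : ℝ) ^ 2 * b N ^ 2 * (1 - ε)) := by
  rintro ε ⟨hε, -⟩
  have hNb := hbinf.atTop_of_div_of_one_le eventually_one_le_sqrt_log
  obtain ⟨N₀, hN₀⟩ := eventually_atTop.1 <|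
    (eventually_log_two_sub_le α hε hb0 hNb).and <| (hNb.eventually_gt_atTop 0).and <|
      (hb0.eventually_lt_const one_pos).and <|
        tendsto_natCast_atTop_atTop.eventually_gt_atTop (-α)
  refine ⟨N₀, fun N hN => ?_⟩
  obtain ⟨hexponent, hNbN, hb1, hNα⟩ := hN₀ N hN
  have hbN : 0 < b N := pos_of_mul_pos_right hNbN N.cast_nonneg
  have hk : 0 < (N : ℝ) * ((N : ℝ) + α) :=
    mul_pos (pos_of_mul_pos_left hNbN hbN.le) (by linarith)
  rw [gammaDens_eq_gammaPDFReal, setIntegral_const_mul_comp_mul _ hk,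
    setIntegral_const_mul_comp_mul _ hk, LinearOrderedField.smul_Ioc hk,
    LinearOrderedField.smul_Ioi hk, mul_zero]
  calc _ ≤ 2 * Real.exp (-((N : ℝ) * ((N : ℝ) + α) * (b N ^ 2 / 2 - b N ^ 3 / (1 - b N)))) :=
        integral_Ioc_add_integral_Ioi_gammaPDFReal_le hk hbN hb1
    _ = Real.exp (Real.log 2 -
          (N : ℝ) * ((N : ℝ) + α) * (b N ^ 2 / 2 - b N ^ 3 / (1 - b N))) := by
        rw [Real.exp_sub, Real.exp_neg, Real.exp_log two_pos, ← div_eq_mul_inv]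
    _ ≤ _ := Real.exp_le_exp.2 hexponent

/-- concentration of the Gamma-distributed trace variable in a shrinking
window around 1. -/
theorem gamma_trace_concentration (α : ℝ) (hα : -1 < α) (b : ℕ → ℝ)
    (hb : ∀ N, 0 < b N ∧ b N < 1)
    (hb0 : Tendsto b atTop (𝓝 0))
    (hbinf : Tendsto (fun N : ℕ => (N : ℝ) * b N / Real.sqrt (Real.log N)) atTop atTop) :
    ∀ ε ∈ Set.Ioo (0 : ℝ) 1, ∃ N₀ : ℕ, ∀ N : ℕ, N₀ ≤ N →
      (∫ u in Set.Ioc (0 : ℝ) (1 - b N),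
          (N : ℝ) * ((N : ℝ) + α) * gammaDens α N ((N : ℝ) * ((N : ℝ) + α) * u)) +
        (∫ u in Set.Ioi (1 + b N),
          (N : ℝ) * ((N : ℝ) + α) * gammaDens α N ((N : ℝ) * ((N : ℝ) + α) * u)) ≤
      Real.exp (-(1 / 2) * (N : ℝ) ^ 2 * b N ^ 2 * (1 - ε)) :=
  gamma_trace_concentration_general α b hb0 hbinf

end RMT
end
end
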